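/- arXiv:1912.09765 — 6 statements merged into one kernel-verified Lean document; each statement's English description precedes it below -/
import Mathlib

section
/- Let μ > 0 and let r ≥ 1 and t ≥ 0 be integers. On a probability space, let S and X_{i,j} (for i = 1,…,t and j = 1,…,r) be random variables such that the whole family {S} ∪ {X_{i,j}} is mutually independent and each variable is exponentially distributed with rate μ. Define T = min( S, max_{j≤r} X_{1,j}, …, max_{j≤r} X_{t,j} ). Then the expectation of T equals E[T] = (1/(μ r)) · B(t+1, 1/r), where B is the real Beta function. -/
/-!
The download time exceeds `s` exactly when `S` does and, in every recovery group, some server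
does. The `t + 1` groups of servers are disjoint blocks of an independent family, so
`P(T > s) = e^{-μs} (1 - (1 - e^{-μs})^r)^t`, and the layer-cake formula
`E[T] = ∫₀^∞ P(T > s) ds` turns the claim into a one-variable identity. Expanding
`(1 - x)^t` binomially, both that integral and `B(t+1, 1/r) = ∫₀¹ (1-u)^t u^{1/r-1} du` become
`∑ₖ (-1)^k C(t,k) / (rk + 1)` up to the factors `1/μ` and `1/r`, termwise by
`∫₀^∞ e^{-μs} (1 - e^{-μs})^m ds = 1/(μ(m+1))`.
-/

open MeasureTheory ProbabilityTheory

/-- The real Beta function `B(x,y) = ∫₀¹ v^(x-1) (1-v)^(y-1) dv`. -/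
noncomputable def betaFn (x y : ℝ) : ℝ :=
  ∫ v in (0:ℝ)..1, v ^ (x - 1) * (1 - v) ^ (y - 1)

open Real Set Filter Topology

lemma lt_ciInf_iff_of_finite {ι β : Type*} [ConditionallyCompleteLinearOrder β] [Finite ι]
    [Nonempty ι] {f : ι → β} {a : β} : a < ⨅ i, f i ↔ ∀ i, a < f i := by
  refine ⟨fun h i ↦ h.trans_le (ciInf_le (finite_range f).bddBelow i), fun h ↦ ?_⟩
  obtain ⟨i, hi⟩ := exists_eq_ciInf_of_finite (f := f)
  exact hi ▸ h i

namespace ProbabilityTheory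

variable {Ω ι κ : Type*} {mΩ : MeasurableSpace Ω} {μ : Measure Ω}

theorem iIndep.iIndep_biSup_fiber {m : ι → MeasurableSpace Ω} (h_le : ∀ i, m i ≤ mΩ)
    (h : iIndep m μ) (c : ι → κ) : iIndep (fun k ↦ ⨆ i ∈ c ⁻¹' {k}, m i) μ := by
  have := h.isProbabilityMeasure
  classical
  rw [iIndep_iff]
  intro s
  induction s using Finset.induction with
  | empty => simp
  | @insert k F hkF ih =>
    intro E hE
    have h_disj : Disjoint (c ⁻¹' {k}) (c ⁻¹' F) :=
      Set.disjoint_left.2 fun i hik hiF ↦ hkF (by simpa [show c i = k from hik] using hiF)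
    have hE_F : MeasurableSet[⨆ i ∈ c ⁻¹' F, m i] (⋂ k' ∈ F, E k') :=
      .biInter F.countable_toSet fun k' hk' ↦ by
        have h_mono : ⨆ i ∈ c ⁻¹' {k'}, m i ≤ ⨆ i ∈ c ⁻¹' F, m i :=
          biSup_mono fun i (hi : c i = k') ↦ show c i ∈ F from hi ▸ hk'
        exact h_mono _ (hE k' (Finset.mem_insert_of_mem hk'))
    rw [Finset.set_biInter_insert, Finset.prod_insert hkF,
      (Indep_iff _ _ _).1 (indep_iSup_of_disjoint h_le h h_disj) _ _
        (hE k (Finset.mem_insert_self k F)) hE_F,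
      ih fun k' hk' ↦ hE k' (Finset.mem_insert_of_mem hk')]

theorem iIndepFun.iIndepFun_of_measurable_biSup_comap {β γ : Type*} [MeasurableSpace β]
    [MeasurableSpace γ] {f : ι → Ω → β} (hf : ∀ i, Measurable (f i)) (h : iIndepFun f μ)
    (c : ι → κ) {g : κ → Ω → γ}
    (hg : ∀ k, Measurable[⨆ i ∈ c ⁻¹' {k}, MeasurableSpace.comap (f i) inferInstance] (g k)) :
    iIndepFun g μ := by
  rw [iIndepFun_iff]
  intro s E hE
  exact (h.iIndep.iIndep_biSup_fiber (fun i ↦ (hf i).comap_le) c).meas_biInter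
    fun k hk ↦ (hg k).comap_le _ (hE k hk)

section Extrema

variable {β : Type*} [ConditionallyCompleteLinearOrder β] [TopologicalSpace β]
  [OrderClosedTopology β] [MeasurableSpace β] [OpensMeasurableSpace β]
  [Fintype ι] [Nonempty ι] {X : ι → Ω → β}

lemma iIndepFun.measureReal_lt_iInf (h : iIndepFun X μ) (a : β) :
    μ.real {ω | a < ⨅ i, X i ω} = ∏ i, μ.real {ω | a < X i ω} := by
  have h_inter : {ω | a < ⨅ i, X i ω} = ⋂ i, X i ⁻¹' Ioi a := by
    ext ω; simp [lt_ciInf_iff_of_finite]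
  rw [h_inter, measureReal_def, h.meas_iInter fun i ↦ ⟨_, measurableSet_Ioi, rfl⟩,
    ENNReal.toReal_prod]
  rfl

lemma iIndepFun.measureReal_iSup_le (h : iIndepFun X μ) (a : β) :
    μ.real {ω | ⨆ i, X i ω ≤ a} = ∏ i, μ.real {ω | X i ω ≤ a} := by
  have h_inter : {ω | ⨆ i, X i ω ≤ a} = ⋂ i, X i ⁻¹' Iic a := by
    ext ω; simp [ciSup_le_iff (finite_range _).bddAbove]
  rw [h_inter, measureReal_def, h.meas_iInter fun i ↦ ⟨_, measurableSet_Iic, rfl⟩,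
    ENNReal.toReal_prod]
  rfl

end Extrema

end ProbabilityTheory

lemma one_sub_pow_eq_sum {R : Type*} [CommRing R] (x : R) (n : ℕ) :
    (1 - x) ^ n = ∑ k ∈ Finset.range (n + 1), (-1) ^ k * (n.choose k : R) * x ^ k := by
  rw [sub_eq_add_neg, add_comm, add_pow]
  refine Finset.sum_congr rfl fun k _ ↦ ?_
  rw [neg_pow, one_pow, mul_one]
  ring

section ExpIntegral

variable {μ : ℝ}

lemma hasDerivAt_one_sub_exp_neg_mul_pow_succ_div (hμ : 0 < μ) (m : ℕ) (s : ℝ) :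
    HasDerivAt (fun s ↦ (1 - exp (-(μ * s))) ^ (m + 1) / (μ * (m + 1)))
      (exp (-(μ * s)) * (1 - exp (-(μ * s))) ^ m) s := by
  have h_inner : HasDerivAt (fun s ↦ 1 - exp (-(μ * s))) (μ * exp (-(μ * s))) s := by
    simpa [sub_eq_add_neg] using (hasDerivAt_neg_exp_mul_exp (r := μ) (x := s)).const_add 1
  refine ((h_inner.pow (m + 1)).div_const (μ * (m + 1))).congr_deriv ?_
  rw [Nat.add_sub_cancel]
  field_simp
  push_cast
  ring

lemma tendsto_one_sub_exp_neg_mul_pow_succ_div (hμ : 0 < μ) (m : ℕ) :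
    Tendsto (fun s ↦ (1 - exp (-(μ * s))) ^ (m + 1) / (μ * (m + 1))) atTop
      (𝓝 (1 / (μ * (m + 1)))) := by
  have h_exp : Tendsto (fun s ↦ exp (-(μ * s))) atTop (𝓝 0) :=
    tendsto_exp_atBot.comp (tendsto_neg_atTop_atBot.comp (tendsto_id.const_mul_atTop hμ))
  simpa using (((tendsto_const_nhds (x := (1 : ℝ))).sub h_exp).pow (m + 1)).div_const (μ * (m + 1))

lemma exp_neg_mul_mul_one_sub_pow_nonneg (hμ : 0 < μ) (m : ℕ) {s : ℝ} (hs : 0 ≤ s) :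
    0 ≤ exp (-(μ * s)) * (1 - exp (-(μ * s))) ^ m := by
  have h_le_one : exp (-(μ * s)) ≤ 1 := exp_le_one_iff.2 (neg_nonpos.2 (mul_nonneg hμ.le hs))
  exact mul_nonneg (exp_pos _).le (pow_nonneg (sub_nonneg.2 h_le_one) m)

lemma integrableOn_exp_neg_mul_mul_one_sub_pow (hμ : 0 < μ) (m : ℕ) :
    IntegrableOn (fun s ↦ exp (-(μ * s)) * (1 - exp (-(μ * s))) ^ m) (Ioi 0) :=
  integrableOn_Ioi_deriv_of_nonneg' (fun s _ ↦ hasDerivAt_one_sub_exp_neg_mul_pow_succ_div hμ m s)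
    (fun _ hs ↦ exp_neg_mul_mul_one_sub_pow_nonneg hμ m (le_of_lt hs))
    (tendsto_one_sub_exp_neg_mul_pow_succ_div hμ m)

lemma integral_exp_neg_mul_mul_one_sub_pow (hμ : 0 < μ) (m : ℕ) :
    ∫ s in Ioi 0, exp (-(μ * s)) * (1 - exp (-(μ * s))) ^ m = 1 / (μ * (m + 1)) := by
  rw [integral_Ioi_of_hasDerivAt_of_nonneg'
    (fun s _ ↦ hasDerivAt_one_sub_exp_neg_mul_pow_succ_div hμ m s)
    (fun _ hs ↦ exp_neg_mul_mul_one_sub_pow_nonneg hμ m (le_of_lt hs))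
    (tendsto_one_sub_exp_neg_mul_pow_succ_div hμ m)]
  simp

end ExpIntegral

lemma betaFn_natCast_add_one (t : ℕ) {y : ℝ} (hy : 0 < y) :
    betaFn (t + 1) y = ∑ k ∈ Finset.range (t + 1), (-1) ^ k * (t.choose k : ℝ) * (1 / (k + y)) := by
  have h_expand : ∀ u : ℝ, 0 < u → (1 - u) ^ t * u ^ (y - 1)
      = ∑ k ∈ Finset.range (t + 1), (-1) ^ k * (t.choose k : ℝ) * u ^ ((k : ℝ) + y - 1) := by
    intro u hu
    rw [one_sub_pow_eq_sum, Finset.sum_mul]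
    refine Finset.sum_congr rfl fun k _ ↦ ?_
    rw [add_sub_assoc, rpow_add hu, rpow_natCast]
    ring
  have h_int : ∀ k ∈ Finset.range (t + 1), IntervalIntegrable
      (fun u : ℝ ↦ (-1) ^ k * (t.choose k : ℝ) * u ^ ((k : ℝ) + y - 1)) volume 0 1 :=
    fun k _ ↦ (intervalIntegral.intervalIntegrable_rpow'
      (by linarith [k.cast_nonneg (α := ℝ)])).const_mul _
  calc betaFn (t + 1) y = ∫ v in (0 : ℝ)..1, v ^ t * (1 - v) ^ (y - 1) := by simp [betaFn]
    _ = ∫ u in (0 : ℝ)..1, (1 - u) ^ t * u ^ (y - 1) := by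
        simpa using (intervalIntegral.integral_comp_sub_left
          (fun v : ℝ ↦ v ^ t * (1 - v) ^ (y - 1)) (1 : ℝ) (a := 0) (b := 1)).symm
    _ = ∫ u in (0 : ℝ)..1, ∑ k ∈ Finset.range (t + 1),
          (-1) ^ k * (t.choose k : ℝ) * u ^ ((k : ℝ) + y - 1) :=
        intervalIntegral.integral_congr_ae <| .of_forall fun u hu ↦
          h_expand u (by rw [uIoc_of_le zero_le_one] at hu; exact hu.1)
    _ = _ := by
      rw [intervalIntegral.integral_finsetSum h_int]
      refine Finset.sum_congr rfl fun k _ ↦ ?_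
      have hky : 0 < (k : ℝ) + y := by positivity
      rw [intervalIntegral.integral_const_mul, integral_rpow (.inl (by linarith)), sub_add_cancel,
        one_rpow, zero_rpow hky.ne', sub_zero]

lemma integral_exp_neg_mul_mul_one_sub_one_sub_pow_pow {μ : ℝ} (hμ : 0 < μ) (r t : ℕ) :
    ∫ s in Ioi 0, exp (-(μ * s)) * (1 - (1 - exp (-(μ * s))) ^ r) ^ t
      = ∑ k ∈ Finset.range (t + 1), (-1) ^ k * (t.choose k : ℝ) * (1 / (μ * (r * k + 1))) := by
  have h_expand : ∀ s, exp (-(μ * s)) * (1 - (1 - exp (-(μ * s))) ^ r) ^ t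
      = ∑ k ∈ Finset.range (t + 1),
          (-1) ^ k * (t.choose k : ℝ) * (exp (-(μ * s)) * (1 - exp (-(μ * s))) ^ (r * k)) := by
    intro s
    rw [one_sub_pow_eq_sum, Finset.mul_sum]
    refine Finset.sum_congr rfl fun k _ ↦ ?_
    rw [pow_mul]
    ring
  simp_rw [h_expand]
  rw [integral_finsetSum _ fun k _ ↦ (integrableOn_exp_neg_mul_mul_one_sub_pow hμ _).const_mul _]
  refine Finset.sum_congr rfl fun k _ ↦ ?_
  rw [integral_const_mul, integral_exp_neg_mul_mul_one_sub_pow hμ]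
  push_cast
  rfl

lemma integral_eq_setIntegral_Ioi_of_measureReal_lt {α : Type*} [MeasurableSpace α]
    {ν : Measure α} [IsFiniteMeasure ν] {f : α → ℝ} (hf_nn : 0 ≤ᵐ[ν] f) (hf : AEMeasurable f ν)
    {g : ℝ → ℝ} (hg : AEStronglyMeasurable g (volume.restrict (Ioi 0)))
    (hfg : ∀ s, 0 < s → ν.real {a | s < f a} = g s) :
    ∫ a, f a ∂ν = ∫ s in Ioi 0, g s := by
  have hg_nn : 0 ≤ᵐ[volume.restrict (Ioi 0)] g :=
    (ae_restrict_mem measurableSet_Ioi).mono fun s hs ↦ hfg s hs ▸ measureReal_nonneg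
  rw [integral_eq_lintegral_of_nonneg_ae hf_nn hf.aestronglyMeasurable,
    integral_eq_lintegral_of_nonneg_ae hg_nn hg, lintegral_eq_lintegral_meas_lt ν hf_nn hf]
  congr 1
  refine setLIntegral_congr_fun measurableSet_Ioi fun s hs ↦ ?_
  rw [← hfg s hs, ofReal_measureReal]

section ExponentialVariables

variable {Ω : Type*} [MeasurableSpace Ω] {P : Measure Ω} {μ s : ℝ}

lemma expMeasure_real_Iic (hμ : 0 < μ) (hs : 0 ≤ s) :
    (expMeasure μ).real (Iic s) = 1 - exp (-(μ * s)) := by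
  have := isProbabilityMeasure_expMeasure hμ
  rw [← cdf_eq_real, cdf_expMeasure_eq hμ, if_pos hs]

lemma expMeasure_real_Ioi (hμ : 0 < μ) (hs : 0 ≤ s) :
    (expMeasure μ).real (Ioi s) = exp (-(μ * s)) := by
  have := isProbabilityMeasure_expMeasure hμ
  rw [← compl_Iic, probReal_compl_eq_one_sub measurableSet_Iic, expMeasure_real_Iic hμ hs]
  ring

lemma measureReal_le_of_map_eq_expMeasure {W : Ω → ℝ} (hW : Measurable W)
    (hWμ : P.map W = expMeasure μ) (hμ : 0 < μ) (hs : 0 ≤ s) :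
    P.real {ω | W ω ≤ s} = 1 - exp (-(μ * s)) := by
  rw [← expMeasure_real_Iic hμ hs, ← hWμ, map_measureReal_apply hW measurableSet_Iic]
  rfl

lemma measureReal_lt_of_map_eq_expMeasure {W : Ω → ℝ} (hW : Measurable W)
    (hWμ : P.map W = expMeasure μ) (hμ : 0 < μ) (hs : 0 ≤ s) :
    P.real {ω | s < W ω} = exp (-(μ * s)) := by
  rw [← expMeasure_real_Ioi hμ hs, ← hWμ, map_measureReal_apply hW measurableSet_Ioi]
  rfl

lemma ae_nonneg_of_map_eq_expMeasure {W : Ω → ℝ} (hW : Measurable W)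
    (hWμ : P.map W = expMeasure μ) (hμ : 0 < μ) : ∀ᵐ ω ∂P, 0 ≤ W ω := by
  have h_Iic : P.map W (Iic 0) = 0 := by
    have := isProbabilityMeasure_expMeasure hμ
    rw [hWμ, ← measureReal_eq_zero_iff, expMeasure_real_Iic hμ le_rfl]
    simp
  exact ae_of_ae_map hW.aemeasurable
    (measure_mono_null (fun x (hx : ¬0 ≤ x) ↦ (not_le.1 hx).le) h_Iic)

lemma measureReal_lt_iSup_of_iIndepFun_expMeasure {ι : Type*} [Fintype ι] [Nonempty ι]
    [IsProbabilityMeasure P] {W : ι → Ω → ℝ} (hW : ∀ j, Measurable (W j)) (h : iIndepFun W P)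
    (hWμ : ∀ j, P.map (W j) = expMeasure μ) (hμ : 0 < μ) (hs : 0 ≤ s) :
    P.real {ω | s < ⨆ j, W j ω} = 1 - (1 - exp (-(μ * s))) ^ Fintype.card ι := by
  have h_compl : {ω | s < ⨆ j, W j ω} = {ω | ⨆ j, W j ω ≤ s}ᶜ := by
    ext ω; simp
  rw [h_compl, probReal_compl_eq_one_sub (measurableSet_le (.iSup hW) measurable_const),
    h.measureReal_iSup_le]
  simp [measureReal_le_of_map_eq_expMeasure (hW _) (hWμ _) hμ hs]

end ExponentialVariables

noncomputable def downloadTime {Ω : Type*} {t r : ℕ} (S : Ω → ℝ) (X : Fin t → Fin r → Ω → ℝ)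
    (ω : Ω) : ℝ :=
  ⨅ o : Option (Fin t), o.elim (S ω) fun i ↦ ⨆ j, X i j ω

section DownloadTime

variable {Ω : Type*} {t r : ℕ} {S : Ω → ℝ} {X : Fin t → Fin r → Ω → ℝ}

lemma measurable_downloadTime [MeasurableSpace Ω] (hSm : Measurable S)
    (hXm : ∀ i j, Measurable (X i j)) :
    Measurable (downloadTime S X) := by
  refine Measurable.iInf fun o ↦ ?_
  rcases o with _ | i
  exacts [hSm, Measurable.iSup fun j ↦ hXm i j]

lemma downloadTime_nonneg [NeZero r] {ω : Ω} (hS : 0 ≤ S ω) (hX : ∀ i j, 0 ≤ X i j ω) :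
    0 ≤ downloadTime S X ω := by
  refine le_ciInf fun o ↦ ?_
  rcases o with _ | i
  exacts [hS, (hX i 0).trans (le_ciSup (f := fun j ↦ X i j ω) (finite_range _).bddAbove 0)]

lemma iIndepFun_option_elim_iSup [MeasurableSpace Ω] {Pr : Measure Ω} (hSm : Measurable S)
    (hXm : ∀ i j, Measurable (X i j))
    (hindep : iIndepFun (fun o : Option (Fin t × Fin r) ↦ o.elim S fun p ↦ X p.1 p.2) Pr) :
    iIndepFun (fun (o : Option (Fin t)) ω ↦ o.elim (S ω) fun i ↦ ⨆ j, X i j ω) Pr := by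
  set Z := fun o : Option (Fin t × Fin r) ↦ o.elim S fun p ↦ X p.1 p.2
  have hZm : ∀ o, Measurable (Z o) := by
    rintro (_ | ⟨i, j⟩)
    exacts [hSm, hXm i j]
  refine hindep.iIndepFun_of_measurable_biSup_comap hZm (Option.map Prod.fst) ?_
  rintro (_ | i)
  · exact Measurable.of_comap_le
      (le_biSup (fun o ↦ (inferInstance : MeasurableSpace ℝ).comap (Z o))
        (show none ∈ Option.map Prod.fst ⁻¹' {none} from rfl))
  · exact Measurable.iSup fun j ↦ Measurable.of_comap_le
      (le_biSup (fun o ↦ (inferInstance : MeasurableSpace ℝ).comap (Z o))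
        (show some (i, j) ∈ Option.map Prod.fst ⁻¹' {some i} from rfl))

lemma measureReal_lt_downloadTime [MeasurableSpace Ω] [NeZero r] {Pr : Measure Ω}
    [IsProbabilityMeasure Pr] {μ : ℝ} (hμ : 0 < μ) (hSm : Measurable S)
    (hXm : ∀ i j, Measurable (X i j))
    (hindep : iIndepFun (fun o : Option (Fin t × Fin r) ↦ o.elim S fun p ↦ X p.1 p.2) Pr)
    (hS : Pr.map S = expMeasure μ) (hX : ∀ i j, Pr.map (X i j) = expMeasure μ)
    {s : ℝ} (hs : 0 ≤ s) :
    Pr.real {ω | s < downloadTime S X ω}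
      = exp (-(μ * s)) * (1 - (1 - exp (-(μ * s))) ^ r) ^ t := by
  have h_group (i : Fin t) : Pr.real {ω | s < ⨆ j, X i j ω} = 1 - (1 - exp (-(μ * s))) ^ r := by
    simpa using measureReal_lt_iSup_of_iIndepFun_expMeasure (hXm i)
      (hindep.precomp (g := fun j ↦ some (i, j)) fun j j' h ↦ by simpa using h) (hX i) hμ hs
  unfold downloadTime
  rw [(iIndepFun_option_elim_iSup hSm hXm hindep).measureReal_lt_iInf, Fintype.prod_option]
  simp only [Option.elim, h_group, Finset.prod_const, Finset.card_univ, Fintype.card_fin,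
    measureReal_lt_of_map_eq_expMeasure hSm hS hμ hs]

end DownloadTime

/-- **Expected download time for an (r,t)-availability code, low-traffic regime.**
With `S` and the `X i j` i.i.d. `Exp(μ)` and mutually independent, and
`T = min(S, max_j X 0 j, …, max_j X (t-1) j)`, one has `E[T] = (1/(μ r)) B(t+1, 1/r)`. -/
theorem expected_download_time_availability_code
    {Ω : Type*} [MeasurableSpace Ω] (Pr : Measure Ω) [IsProbabilityMeasure Pr]
    (μ : ℝ) (hμ : 0 < μ) (r t : ℕ) (hr : 1 ≤ r)
    (S : Ω → ℝ) (X : Fin t → Fin r → Ω → ℝ)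
    (hSm : Measurable S) (hXm : ∀ i j, Measurable (X i j))
    (hindep : iIndepFun
      (fun o : Option (Fin t × Fin r) => o.elim S (fun p => X p.1 p.2)) Pr)
    (hS : Pr.map S = expMeasure μ)
    (hX : ∀ i j, Pr.map (X i j) = expMeasure μ)
    (T : Ω → ℝ)
    (hT : T = fun ω => ⨅ o : Option (Fin t), o.elim (S ω) (fun i => ⨆ j : Fin r, X i j ω)) :
    ∫ ω, T ω ∂Pr = 1 / (μ * r) * betaFn ((t : ℝ) + 1) (1 / r) := by
  have : NeZero r := ⟨by omega⟩
  have h_nonneg : 0 ≤ᵐ[Pr] downloadTime S X := by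
    filter_upwards [ae_nonneg_of_map_eq_expMeasure hSm hS hμ, ae_all_iff.2 fun i ↦
      ae_all_iff.2 fun j ↦ ae_nonneg_of_map_eq_expMeasure (hXm i j) (hX i j) hμ]
      with ω hSω hXω using downloadTime_nonneg hSω hXω
  have h_cont : Continuous fun s ↦ exp (-(μ * s)) * (1 - (1 - exp (-(μ * s))) ^ r) ^ t := by
    fun_prop
  subst hT
  change ∫ ω, downloadTime S X ω ∂Pr = _
  rw [integral_eq_setIntegral_Ioi_of_measureReal_lt h_nonneg
      (measurable_downloadTime hSm hXm).aemeasurable h_cont.aestronglyMeasurable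
      fun s hs ↦ measureReal_lt_downloadTime hμ hSm hXm hindep hS hX hs.le,
    integral_exp_neg_mul_mul_one_sub_one_sub_pow_pow hμ, betaFn_natCast_add_one t (by positivity),
    Finset.mul_sum]
  refine Finset.sum_congr rfl fun k _ ↦ ?_
  field_simp
end

section
/- Let μ > 0 and let r ≥ 1 and t ≥ 0 be integers. Then ∫₀^∞ e^{−μs} · (1 − (1 − e^{−μs})^r)^t ds = (1/(μ r)) · B(t+1, 1/r), where B is the real Beta function. -/
/-!
Substituting `w = e^{-μs}` (so `dw = -μ w ds`), then `u = 1 - w` and `v = u^r`, turns the integral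
into `(μ r)⁻¹ ∫₀¹ v^{1/r - 1} (1 - v)^t dv = (μ r)⁻¹ B(1/r, t + 1)`, and `B` is symmetric.
-/

open MeasureTheory

open Set Real

variable {E : Type*} [NormedAddCommGroup E] [NormedSpace ℝ E]

theorem image_exp_neg_mul_Ioi_zero {μ : ℝ} (hμ : 0 < μ) :
    (fun s => exp (-μ * s)) '' Ioi 0 = Ioo 0 1 := by
  have h : (fun s => exp (-μ * s)) = exp ∘ Neg.neg ∘ (μ * ·) := by
    ext s; simp [neg_mul]
  rw [h, image_comp, image_comp, image_mul_left_Ioi hμ, mul_zero, image_neg_Ioi, neg_zero,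
    image_exp_Iio, exp_zero]

theorem image_rpow_Ioo_zero_one {p : ℝ} (hp : 0 < p) : (· ^ p) '' Ioo (0:ℝ) 1 = Ioo 0 1 := by
  ext x
  constructor
  · rintro ⟨u, ⟨hu0, hu1⟩, rfl⟩
    exact ⟨rpow_pos_of_pos hu0 p, rpow_lt_one hu0.le hu1 hp⟩
  · rintro ⟨hx0, hx1⟩
    exact ⟨x ^ p⁻¹, ⟨rpow_pos_of_pos hx0 _, rpow_lt_one hx0.le hx1 (inv_pos.2 hp)⟩,
      by simp [← rpow_mul hx0.le, hp.ne']⟩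

theorem integral_Ioi_exp_neg_mul_smul_comp {μ : ℝ} (hμ : 0 < μ) (g : ℝ → E) :
    ∫ s in Ioi 0, exp (-μ * s) • g (exp (-μ * s)) = μ⁻¹ • ∫ w in (0:ℝ)..1, g w := by
  have hderiv (s : ℝ) : HasDerivAt (fun s => exp (-μ * s)) (exp (-μ * s) * -μ) s := by
    simpa using ((hasDerivAt_id s).const_mul (-μ)).exp
  have hinj : InjOn (fun s => exp (-μ * s)) (Ioi 0) := fun a _ b _ hab => by
    simpa [hμ.ne'] using exp_injective hab
  rw [intervalIntegral.integral_of_le zero_le_one, integral_Ioc_eq_integral_Ioo,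
    ← image_exp_neg_mul_Ioi_zero hμ, integral_image_eq_integral_abs_deriv_smul measurableSet_Ioi
      (fun s _ => (hderiv s).hasDerivWithinAt) hinj, ← integral_smul]
  refine setIntegral_congr_fun measurableSet_Ioi fun s _ => ?_
  rw [smul_smul, abs_mul, abs_neg, abs_of_pos hμ, abs_of_pos (exp_pos _)]
  field_simp

theorem integral_comp_rpow_zero_one {p : ℝ} (hp : 0 < p) (g : ℝ → E) :
    ∫ u in (0:ℝ)..1, g (u ^ p) = p⁻¹ • ∫ v in (0:ℝ)..1, v ^ (p⁻¹ - 1) • g v := by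
  simp only [intervalIntegral.integral_of_le zero_le_one, integral_Ioc_eq_integral_Ioo]
  have hsubst := integral_image_eq_integral_abs_deriv_smul (measurableSet_Ioo (a := 0) (b := 1))
    (fun u hu => (hasDerivAt_rpow_const (Or.inl hu.1.ne')).hasDerivWithinAt)
    ((rpow_left_injOn hp.ne').mono fun u hu => hu.1.le) fun v => v ^ (p⁻¹ - 1) • g v
  rw [image_rpow_Ioo_zero_one hp] at hsubst
  rw [hsubst, ← integral_smul]
  refine setIntegral_congr_fun measurableSet_Ioo fun u ⟨hu0, _⟩ => ?_
  have hjac : p⁻¹ * |p * u ^ (p - 1)| * (u ^ p) ^ (p⁻¹ - 1) = 1 := by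
    rw [abs_of_pos (by positivity), ← rpow_mul hu0.le, mul_sub, mul_inv_cancel₀ hp.ne', mul_one,
      inv_mul_cancel_left₀ hp.ne', ← rpow_add hu0]
    simp
  rw [smul_smul, smul_smul, hjac, one_smul]

theorem betaFn_comm (x y : ℝ) : betaFn x y = betaFn y x := by
  simpa [betaFn, mul_comm] using intervalIntegral.integral_comp_sub_left (a := 0) (b := 1)
    (fun v : ℝ => v ^ (y - 1) * (1 - v) ^ (x - 1)) 1

/-- Integrating the low-traffic survival function of the download time of an
(r,t)-availability code over `[0,∞)` gives `(1/(μ r)) B(t+1, 1/r)`. -/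
theorem integral_survival_eq_beta (μ : ℝ) (hμ : 0 < μ) (r t : ℕ) (hr : 1 ≤ r) :
    ∫ s in Set.Ioi (0:ℝ),
        Real.exp (-μ * s) * (1 - (1 - Real.exp (-μ * s)) ^ r) ^ t
      = 1 / (μ * r) * betaFn ((t : ℝ) + 1) (1 / r) := by
  have hr₀ : (0 : ℝ) < r := by exact_mod_cast hr
  calc ∫ s in Ioi 0, exp (-μ * s) * (1 - (1 - exp (-μ * s)) ^ r) ^ t
      = μ⁻¹ * ∫ w in (0:ℝ)..1, (1 - (1 - w) ^ r) ^ t :=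
        integral_Ioi_exp_neg_mul_smul_comp hμ fun w => (1 - (1 - w) ^ r) ^ t
    _ = μ⁻¹ * ∫ u in (0:ℝ)..1, (1 - u ^ (r : ℝ)) ^ t := by
        simp [intervalIntegral.integral_comp_sub_left (fun u : ℝ => (1 - u ^ r) ^ t)]
    _ = μ⁻¹ * ((r : ℝ)⁻¹ * ∫ v in (0:ℝ)..1, v ^ ((r : ℝ)⁻¹ - 1) * (1 - v) ^ t) := by
        rw [integral_comp_rpow_zero_one hr₀ fun v => (1 - v) ^ t]
        simp only [smul_eq_mul]
    _ = 1 / (μ * r) * betaFn (1 / r) ((t : ℝ) + 1) := by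
        rw [betaFn, add_sub_cancel_right]
        simp only [rpow_natCast, one_div, mul_inv]
        ring
    _ = 1 / (μ * r) * betaFn ((t : ℝ) + 1) (1 / r) := by rw [betaFn_comm]
end

section
/- Let μ > 0 and let n > k ≥ 1 be integers. Then ∫₀^∞ e^{−μs} · ( Σ_{j=0}^{k−1} C(n−1, j) (1 − e^{−μs})^j e^{−μ(n−1−j)s} ) ds = k/(nμ), where C(·,·) denotes the binomial coefficient. -/
/-! With `I(j, c) = ∫₀^∞ (1 - e^{-μs})^j e^{-μcs} ds`, the `j`-th term of the integrand
integrates to `C(n-1, j) · I(j, n-j)`, since `e^{-μs} e^{-μ(n-1-j)s} = e^{-μ(n-j)s}`.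
Differentiating `(1 - e^{-μs})^{j+1} e^{-μcs}`, which vanishes at `0` and at `∞`, gives
`c · I(j+1, c) = (j+1) · I(j, c+1)`; with `I(0, c) = 1/(μc)` this yields
`I(j, n-j) = 1/(n μ C(n-1, j))` (a Beta integral in `u = e^{-μs}`). So each of the `k` terms
contributes exactly `1/(nμ)`. -/

open MeasureTheory Set Filter Real Topology

section
variable {μ : ℝ}


lemma tendsto_exp_mul_atTop_of_neg {a : ℝ} (ha : a < 0) :
    Tendsto (fun s => exp (a * s)) atTop (𝓝 0) :=
  tendsto_exp_atBot.comp (tendsto_id.const_mul_atTop_of_neg ha)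

lemma integrableOn_one_sub_exp_pow_mul_exp (hμ : 0 < μ) (j : ℕ) {c : ℝ} (hc : 0 < c) :
    IntegrableOn (fun s => (1 - exp (-μ * s)) ^ j * exp (-μ * c * s)) (Ioi 0) := by
  refine Integrable.mono' (integrableOn_exp_mul_Ioi (a := -μ * c) (by nlinarith) 0)
    (by fun_prop) ?_
  filter_upwards [ae_restrict_mem measurableSet_Ioi] with s (hs : 0 < s)
  have hexp : exp (-μ * s) ≤ 1 := exp_le_one_iff.mpr (by nlinarith)
  rw [norm_mul, norm_pow, norm_of_nonneg (sub_nonneg.mpr hexp), norm_of_nonneg (exp_pos _).le]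
  exact mul_le_of_le_one_left (exp_pos _).le
    (pow_le_one₀ (sub_nonneg.mpr hexp) (by linarith [exp_pos (-μ * s)]))

lemma mul_integral_one_sub_exp_pow_succ_mul_exp (hμ : 0 < μ) (j : ℕ) {c : ℝ} (hc : 0 < c) :
    c * ∫ s in Ioi 0, (1 - exp (-μ * s)) ^ (j + 1) * exp (-μ * c * s)
      = (j + 1) * ∫ s in Ioi 0, (1 - exp (-μ * s)) ^ j * exp (-μ * (c + 1) * s) := by
  set F : ℝ → ℝ := fun s => (1 - exp (-μ * s)) ^ (j + 1) * exp (-μ * c * s)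
  set G : ℝ → ℝ := fun s => (1 - exp (-μ * s)) ^ j * exp (-μ * (c + 1) * s)
  have hF : ∀ s, HasDerivAt F ((j + 1) * μ * G s - c * μ * F s) s := by
    intro s
    have hu := (((hasDerivAt_id s).const_mul (-μ)).exp.const_sub 1).fun_pow (j + 1)
    have hv := ((hasDerivAt_id s).const_mul (-μ * c)).exp
    refine (hu.fun_mul hv).congr_deriv ?_
    simp only [F, G, id]
    rw [show -μ * (c + 1) * s = -μ * s + -μ * c * s by ring, exp_add]
    push_cast
    ring
  have hGi : IntegrableOn G (Ioi 0) := integrableOn_one_sub_exp_pow_mul_exp hμ j (by linarith)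
  have hFi : IntegrableOn F (Ioi 0) := integrableOn_one_sub_exp_pow_mul_exp hμ (j + 1) hc
  have hF0 : F 0 = 0 := by simp [F]
  have hlim : Tendsto F atTop (𝓝 0) := by
    have h1 := ((tendsto_exp_mul_atTop_of_neg (neg_lt_zero.mpr hμ)).const_sub 1).pow (j + 1)
    simpa [F] using h1.mul (tendsto_exp_mul_atTop_of_neg (a := -μ * c) (by nlinarith))
  have hftc := integral_Ioi_of_hasDerivAt_of_tendsto (by fun_prop) (fun s _ => hF s)
    ((hGi.const_mul _).sub (hFi.const_mul _)) hlim
  rw [integral_sub (hGi.const_mul _) (hFi.const_mul _), integral_const_mul, integral_const_mul,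
    hF0] at hftc
  exact mul_left_cancel₀ hμ.ne' (by linear_combination -hftc)

lemma choose_mul_integral_one_sub_exp_pow_mul_exp (hμ : 0 < μ) (j m : ℕ) :
    ((m + j).choose j : ℝ) * ∫ s in Ioi 0, (1 - exp (-μ * s)) ^ j * exp (-μ * (m + 1) * s)
      = 1 / ((m + j + 1) * μ) := by
  induction j generalizing m with
  | zero =>
    have hneg : -μ * (m + 1) < 0 := by nlinarith [(m.cast_nonneg : (0 : ℝ) ≤ m)]
    simp only [add_zero, Nat.choose_zero_right, Nat.cast_one, pow_zero, one_mul,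
      integral_exp_mul_Ioi hneg, mul_zero, exp_zero]
    field_simp
    ring
  | succ j ih =>
    have hrec := mul_integral_one_sub_exp_pow_succ_mul_exp hμ j (c := m + 1) (by positivity)
    have hih := ih (m + 1)
    have hchoose : (m + (j + 1)).choose (j + 1) * (j + 1) = (m + 1 + j).choose j * (m + 1) := by
      rw [show m + (j + 1) = m + 1 + j by omega, Nat.choose_succ_right_eq,
        show m + 1 + j - j = m + 1 by omega]
    replace hchoose := congrArg (Nat.cast (R := ℝ)) hchoose
    set I₀ := ∫ s in Ioi 0, (1 - exp (-μ * s)) ^ j * exp (-μ * (m + 1 + 1) * s)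
    push_cast at hih hchoose ⊢
    refine mul_left_cancel₀ (show (m + 1 : ℝ) ≠ 0 by positivity) ?_
    linear_combination
      ((m + j + 1).choose (j + 1) : ℝ) * hrec + I₀ * hchoose + (m + 1 : ℝ) * hih

lemma choose_pred_mul_integral_one_sub_exp_pow_mul_exp (hμ : 0 < μ) {j n : ℕ} (hjn : j < n) :
    ((n - 1).choose j : ℝ) * ∫ s in Ioi 0, (1 - exp (-μ * s)) ^ j * exp (-μ * (n - j) * s)
      = 1 / (n * μ) := by
  obtain ⟨m, rfl⟩ : ∃ m, n = m + j + 1 := ⟨n - j - 1, by omega⟩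
  simpa [add_sub_assoc] using choose_mul_integral_one_sub_exp_pow_mul_exp hμ j m

end

theorem integral_MDS_survival_general (μ : ℝ) (hμ : 0 < μ) (n k : ℕ) (hkn : k < n) :
    ∫ s in Set.Ioi (0:ℝ),
        Real.exp (-μ * s) *
          ∑ j ∈ Finset.range k,
            ((n - 1).choose j : ℝ) * (1 - Real.exp (-μ * s)) ^ j *
              Real.exp (-μ * ((n : ℝ) - 1 - (j : ℝ)) * s)
      = (k : ℝ) / ((n : ℝ) * μ) := by
  have hint : ∀ j ∈ Finset.range k,
      IntegrableOn (fun s => (1 - exp (-μ * s)) ^ j * exp (-μ * (n - j) * s)) (Ioi 0) := by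
    intro j hj
    refine integrableOn_one_sub_exp_pow_mul_exp hμ j (sub_pos.mpr ?_)
    exact_mod_cast (Finset.mem_range.mp hj).trans hkn
  calc _ = ∫ s in Ioi 0, ∑ j ∈ Finset.range k, ((n - 1).choose j : ℝ) *
          ((1 - exp (-μ * s)) ^ j * exp (-μ * (n - j) * s)) := by
        refine setIntegral_congr_fun measurableSet_Ioi fun s _ => ?_
        rw [Finset.mul_sum]
        refine Finset.sum_congr rfl fun j _ => ?_
        rw [show -μ * (n - j) * s = -μ * s + -μ * (n - 1 - j) * s by ring, exp_add]
        ring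
    _ = ∑ j ∈ Finset.range k, 1 / (n * μ) := by
        rw [integral_finsetSum _ fun j hj => (hint j hj).const_mul _]
        refine Finset.sum_congr rfl fun j hj => ?_
        rw [integral_const_mul, choose_pred_mul_integral_one_sub_exp_pow_mul_exp hμ
          ((Finset.mem_range.mp hj).trans hkn)]
    _ = k / (n * μ) := by simp [div_eq_mul_inv]

/-- Integrating the survival function `P(T > s) = e^{-μs} Σ_{j=0}^{k-1} C(n-1,j)
(1-e^{-μs})^j e^{-μ(n-1-j)s}` of the download time of an (n,k)-MDS coded system
over `[0,∞)` gives `k/(nμ)`. -/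
theorem integral_MDS_survival (μ : ℝ) (hμ : 0 < μ) (n k : ℕ) (hk : 1 ≤ k) (hkn : k < n) :
    ∫ s in Set.Ioi (0:ℝ),
        Real.exp (-μ * s) *
          ∑ j ∈ Finset.range k,
            ((n - 1).choose j : ℝ) * (1 - Real.exp (-μ * s)) ^ j *
              Real.exp (-μ * ((n : ℝ) - 1 - (j : ℝ)) * s)
      = (k : ℝ) / ((n : ℝ) * μ) :=
  integral_MDS_survival_general μ hμ n k hkn
end

section
/- Let μ > 0, s ≥ 0, let r ≥ 1 and t ≥ 0 be integers, and let ν = (ν_0, …, ν_{r−1}) be a vector of non-negative integers with ν_0 + ⋯ + ν_{r−1} = t. Then e^{−μ(t+1)s} ≤ e^{−μs} · Π_{d=0}^{r−1} (1 − (1 − e^{−μs})^{r−d})^{ν_d} ≤ e^{−μs} · (1 − (1 − e^{−μs})^r)^t. -/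
/-- Every type-ν service-time survival function in the FJ-FA system with an
(r,t)-availability code lies between the survival functions of the fastest service
time `S_fastest` (LHS) and the slowest service time `S_slowest` (RHS). -/
theorem survival_between_fastest_and_slowest
    (μ s : ℝ) (hμ : 0 < μ) (hs : 0 ≤ s) (r t : ℕ) (hr : 1 ≤ r)
    (ν : Fin r → ℕ) (hν : ∑ d, ν d = t) :
    Real.exp (-μ * ((t : ℝ) + 1) * s) ≤
        Real.exp (-μ * s) *
          ∏ d : Fin r, (1 - (1 - Real.exp (-μ * s)) ^ (r - d.val)) ^ ν d ∧
      Real.exp (-μ * s) *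
          ∏ d : Fin r, (1 - (1 - Real.exp (-μ * s)) ^ (r - d.val)) ^ ν d ≤
        Real.exp (-μ * s) * (1 - (1 - Real.exp (-μ * s)) ^ r) ^ t := by
  set e := Real.exp (-μ * s) with he
  have he0 : 0 < e := Real.exp_pos _
  have he1 : e ≤ 1 := Real.exp_le_one_iff.mpr (by nlinarith)
  set q := 1 - e with hq
  have hq0 : 0 ≤ q := by linarith
  have hq1 : q ≤ 1 := by linarith
  have key : ∀ d : Fin r, e ≤ 1 - q ^ (r - d.val) := by
    intro d
    have h1 : 1 ≤ r - d.val := by omega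
    have h2 : q ^ (r - d.val) ≤ q ^ 1 :=
      pow_le_pow_of_le_one hq0 hq1 h1
    simp only [pow_one] at h2
    linarith
  have key2 : ∀ d : Fin r, 1 - q ^ (r - d.val) ≤ 1 - q ^ r := by
    intro d
    have h2 : q ^ r ≤ q ^ (r - d.val) :=
      pow_le_pow_of_le_one hq0 hq1 (Nat.sub_le r d.val)
    linarith
  constructor
  · have lhs_eq : Real.exp (-μ * ((t : ℝ) + 1) * s) = e * e ^ t := by
      have : -μ * ((t : ℝ) + 1) * s = ((t + 1 : ℕ) : ℝ) * (-μ * s) := by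
        push_cast; ring
      rw [this, Real.exp_nat_mul, ← he, pow_succ, mul_comm]
    rw [lhs_eq]
    apply mul_le_mul_of_nonneg_left _ he0.le
    calc e ^ t = ∏ d : Fin r, e ^ ν d := by
          rw [Finset.prod_pow_eq_pow_sum, hν]
      _ ≤ _ := Finset.prod_le_prod (fun d _ => pow_nonneg he0.le _)
          (fun d _ => pow_le_pow_left₀ he0.le (key d) _)
  · apply mul_le_mul_of_nonneg_left _ he0.le
    calc (∏ d : Fin r, (1 - q ^ (r - d.val)) ^ ν d)
        ≤ ∏ d : Fin r, (1 - q ^ r) ^ ν d :=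
          Finset.prod_le_prod (fun d _ => pow_nonneg (by linarith [key d]) _)
            (fun d _ => pow_le_pow_left₀ (by linarith [key d]) (key2 d) _)
      _ = (1 - q ^ r) ^ t := by rw [Finset.prod_pow_eq_pow_sum, hν]
end

section
/- Let γ, α, β > 0 be real numbers with α < β + γ and β < α + γ. Define c = (γ² − (α − β)²) / (γ(α + β + γ)). Then c > 0 and c · ( 1 + Σ_{i=1}^{∞} (α/(β+γ))^i + Σ_{i=1}^{∞} (β/(α+γ))^i ) = 1; that is, the family p_{0,0} = c, p_{i,0} = (α/(β+γ))^i c and p_{0,i} = (β/(α+γ))^i c (for i ≥ 1) is a probability distribution. -/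
lemma geom_shift (r : ℝ) (h0 : 0 ≤ r) (h1 : r < 1) :
    (∑' i : ℕ, r ^ (i + 1)) = r / (1 - r) := by
  have : (∑' i : ℕ, r ^ (i + 1)) = ∑' i : ℕ, r * r ^ i := by
    congr 1; ext i; ring
  rw [this, tsum_mul_left, tsum_geometric_of_lt_one h0 h1, div_eq_mul_inv]

/-- The limiting state probabilities of the high-traffic approximation of FJ-FA with
availability one and locality two form a probability distribution:
with `c = (γ² - (α-β)²)/(γ(α+β+γ))`, one has `c > 0` and
`c (1 + Σ_{i≥1} (α/(β+γ))^i + Σ_{i≥1} (β/(α+γ))^i) = 1`. -/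
theorem high_traffic_stationary_distribution
    (α β γ : ℝ) (hα : 0 < α) (hβ : 0 < β) (hγ : 0 < γ)
    (h1 : α < β + γ) (h2 : β < α + γ)
    (c : ℝ) (hc : c = (γ ^ 2 - (α - β) ^ 2) / (γ * (α + β + γ))) :
    0 < c ∧
      c * (1 + (∑' i : ℕ, (α / (β + γ)) ^ (i + 1))
             + (∑' i : ℕ, (β / (α + γ)) ^ (i + 1))) = 1 := by
  have hbγ : 0 < β + γ := by linarith
  have haγ : 0 < α + γ := by linarith
  have hr1 : α / (β + γ) < 1 := (div_lt_one hbγ).mpr h1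
  have hr2 : β / (α + γ) < 1 := (div_lt_one haγ).mpr h2
  have hr1' : 0 ≤ α / (β + γ) := by positivity
  have hr2' : 0 ≤ β / (α + γ) := by positivity
  have hnum : 0 < γ ^ 2 - (α - β) ^ 2 := by nlinarith
  constructor
  · rw [hc]; positivity
  · rw [geom_shift _ hr1' hr1, geom_shift _ hr2' hr2, hc]
    have e1 : 1 - α / (β + γ) = (β + γ - α) / (β + γ) := by field_simp
    have e2 : 1 - β / (α + γ) = (α + γ - β) / (α + γ) := by field_simp
    have h3 : β + γ - α ≠ 0 := by linarith
    have h4 : α + γ - β ≠ 0 := by linarith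
    rw [e1, e2, div_div_div_eq, div_div_div_eq]
    field_simp
    ring
end

section
/- Let μ, γ > 0 and set ν = γ + 2μ. Define π_{0,0} = γ/ν and, for i ≥ 1, π_{i,0} = π_{0,i} = (μ/(μ+γ))^i · (γ/ν). Then: (i) f_{→0} := π_{0,0}·(γ/ν) + (π_{1,0} + π_{0,1})·((μ+γ)/ν) = γ/ν = π_{0,0}; (ii) f_d := π_{0,0}·(γ/ν) + Σ_{i=1}^{∞} (π_{0,i} + π_{i,0})·((μ+γ)/ν) = (2μ² + 2μγ + γ²)/ν²; and (iii) f_{→0}/f_d = γν/(γν + 2μ²), so that 1 − f_{→0}/f_d = 2μ²/(γν + 2μ²). -/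
/-!
With `r = μ/(μ+γ)` the departure sum is a geometric tail, `∑_{i≥1} rⁱ = r/(1-r) = μ/γ`, so
`f_d = (γ² + 2μ(μ+γ))/ν²`. Since `ν = γ + 2μ`, that numerator equals `γν + 2μ²`, and the
quotient `f_{→0}/f_d = (γ/ν)/f_d` collapses to `γν/(γν + 2μ²)`.
-/

lemma tsum_pow_succ_of_abs_lt_one {r : ℝ} (hr : |r| < 1) :
    ∑' i : ℕ, r ^ (i + 1) = r / (1 - r) := by
  simp only [pow_succ', tsum_mul_left, tsum_geometric_of_abs_lt_one hr, div_eq_mul_inv]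

lemma tsum_div_add_pow_succ {μ γ : ℝ} (hμ : 0 ≤ μ) (hγ : 0 < γ) :
    ∑' i : ℕ, (μ / (μ + γ)) ^ (i + 1) = μ / γ := by
  have hμγ : 0 < μ + γ := by linarith
  have hr : |μ / (μ + γ)| < 1 := by
    rw [abs_of_nonneg (by positivity), div_lt_one hμγ]
    linarith
  rw [tsum_pow_succ_of_abs_lt_one hr, one_sub_div hμγ.ne', add_sub_cancel_left,
    div_div_div_cancel_right₀ hμγ.ne']

/-- High-traffic analysis of type-0 service starts in FJ-FA with availability one and
locality two (systematic rate `γ`, recovery rates `μ`, `ν = γ + 2μ`), with stationary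
probabilities `π_{0,0} = γ/ν`, `π_{i,0} = π_{0,i} = (μ/(μ+γ))^i (γ/ν)` for `i ≥ 1`:
(i) `f_{→0} = π_{0,0} γ/ν + (π_{1,0}+π_{0,1})(μ+γ)/ν = γ/ν = π_{0,0}`;
(ii) `f_d = π_{0,0} γ/ν + Σ_{i≥1}(π_{0,i}+π_{i,0})(μ+γ)/ν = (2μ²+2μγ+γ²)/ν²`;
(iii) `f_{→0}/f_d = γν/(γν+2μ²)` and `1 - f_{→0}/f_d = 2μ²/(γν+2μ²)`. -/
theorem high_traffic_type0_fraction
    (μ γ : ℝ) (hμ : 0 < μ) (hγ : 0 < γ) (ν : ℝ) (hν : ν = γ + 2 * μ)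
    (f0 fd : ℝ)
    (hf0 : f0 = (γ / ν) * (γ / ν)
      + ((μ / (μ + γ)) ^ 1 * (γ / ν) + (μ / (μ + γ)) ^ 1 * (γ / ν)) * ((μ + γ) / ν))
    (hfd : fd = (γ / ν) * (γ / ν)
      + ∑' i : ℕ,
          ((μ / (μ + γ)) ^ (i + 1) * (γ / ν) + (μ / (μ + γ)) ^ (i + 1) * (γ / ν))
            * ((μ + γ) / ν)) :
    (f0 = γ / ν) ∧
    (fd = (2 * μ ^ 2 + 2 * μ * γ + γ ^ 2) / ν ^ 2) ∧
    (f0 / fd = γ * ν / (γ * ν + 2 * μ ^ 2)) ∧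
    (1 - f0 / fd = 2 * μ ^ 2 / (γ * ν + 2 * μ ^ 2)) := by
  have hν0 : 0 < ν := by rw [hν]; positivity
  have hμγ : 0 < μ + γ := by positivity
  have hf0' : f0 = γ / ν := by
    rw [hf0, hν]
    field_simp
    ring
  have hfd' : fd = (2 * μ ^ 2 + 2 * μ * γ + γ ^ 2) / ν ^ 2 := by
    have hsummand : ∀ i : ℕ,
        ((μ / (μ + γ)) ^ (i + 1) * (γ / ν) + (μ / (μ + γ)) ^ (i + 1) * (γ / ν)) * ((μ + γ) / ν)
          = 2 * γ * (μ + γ) / ν ^ 2 * (μ / (μ + γ)) ^ (i + 1) := fun i => by ring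
    rw [hfd, tsum_congr hsummand, tsum_mul_left, tsum_div_add_pow_succ hμ.le hγ]
    field_simp
    ring
  have hquot : f0 / fd = γ * ν / (γ * ν + 2 * μ ^ 2) := by
    rw [hf0', hfd', div_div_div_eq, div_eq_div_iff (by positivity) (by positivity), hν]
    ring
  refine ⟨hf0', hfd', hquot, ?_⟩
  rw [hquot, one_sub_div (by positivity), add_sub_cancel_left]
end
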